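/- Let F, G : ℝ → [0,1] be cumulative distribution functions of probability measures on ℝ with finite second moments, and let F⁻¹, G⁻¹ be their (right-continuous) generalized inverses defined by F⁻¹(α) = inf{x : F(x) > α}. Then the 2-Wasserstein distance between the measures equals (∫_0^1 |F⁻¹(α) − G⁻¹(α)|² dα)^{1/2}. -/

import Mathlib

/-!
The monotone coupling `(F⁻¹(U), G⁻¹(U))`, with `U` uniform on `(0, 1)`, has marginals `μ` and `ν`
and gives every upper quadrant `(s, ∞) × (t, ∞)` the mass `min (μ (s, ∞)) (ν (t, ∞))`, the largest
mass any coupling can give it. Since `(x - y)² = x² + y² - 2xy`, only `∫ xy dγ` depends on the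
coupling `γ`. Writing `x = ∫ (1[s < x] - 1[s < 0]) ds` and applying Fubini (Hoeffding's identity),
`∫ xy dγ` is the integral over `(s, t)` of `γ ((s, ∞) × (t, ∞))` plus terms that depend only on the
marginals, so it is largest for the monotone coupling.
-/

open MeasureTheory ProbabilityTheory Set Filter

noncomputable def quantile (μ : Measure ℝ) (α : ℝ) : ℝ := sInf {x | α < cdf μ x}

section Quantile

variable {μ : Measure ℝ} {α t : ℝ}

lemma sInf_lt_measure_Iic_eq_quantile [IsProbabilityMeasure μ] :
    sInf {x | α < (μ (Iic x)).toReal} = quantile μ α := by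
  simp only [quantile, cdf_eq_real, measureReal_def]

lemma bddBelow_setOf_lt_cdf (hα : 0 < α) : BddBelow {x | α < cdf μ x} := by
  obtain ⟨x₀, hx₀⟩ := ((tendsto_cdf_atBot μ).eventually (eventually_lt_nhds hα)).exists
  exact ⟨x₀, fun y hy => le_of_not_gt fun hyx => (hx₀.trans hy).not_ge (monotone_cdf μ hyx.le)⟩

lemma nonempty_setOf_lt_cdf (hα : α < 1) : {x | α < cdf μ x}.Nonempty :=
  ((tendsto_cdf_atTop μ).eventually (eventually_gt_nhds hα)).exists

lemma quantile_le_of_lt_cdf (hα : 0 < α) (h : α < cdf μ t) : quantile μ α ≤ t :=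
  csInf_le (bddBelow_setOf_lt_cdf hα) h

lemma le_cdf_of_quantile_le (hα : α < 1) (h : quantile μ α ≤ t) : α ≤ cdf μ t := by
  rcases le_or_gt α 0 with hα₀ | hα₀
  · exact hα₀.trans (cdf_nonneg μ t)
  have hlt : ∀ s > t, α < cdf μ s := fun s hs => by
    obtain ⟨y, hy, hys⟩ := (csInf_lt_iff (bddBelow_setOf_lt_cdf hα₀)
      (nonempty_setOf_lt_cdf hα)).1 (h.trans_lt hs)
    exact hy.trans_le (monotone_cdf μ hys.le)
  exact ge_of_tendsto (((cdf μ).right_continuous t).mono Ioi_subset_Ici_self)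
    (eventually_nhdsWithin_of_forall fun s hs => (hlt s hs).le)

lemma monotoneOn_quantile : MonotoneOn (quantile μ) (Ioo 0 1) :=
  fun _ ha _ hb hab => csInf_le_csInf (bddBelow_setOf_lt_cdf ha.1) (nonempty_setOf_lt_cdf hb.2)
    fun _ hx => hab.trans_lt hx

lemma aemeasurable_quantile : AEMeasurable (quantile μ) (volume.restrict (Ioo 0 1)) :=
  aemeasurable_restrict_of_monotoneOn measurableSet_Ioo monotoneOn_quantile

lemma quantile_preimage_Ioi_ae_eq (s : ℝ) :
    quantile μ ⁻¹' Ioi s =ᵐ[volume.restrict (Ioo 0 1)] Ioi (cdf μ s) := by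
  refine Eventually.set_eq ?_
  filter_upwards [ae_restrict_mem measurableSet_Ioo,
    ae_restrict_of_ae (volume.ae_ne (cdf μ s))] with α hα hne
  simp only [mem_preimage, mem_Ioi]
  constructor
  · intro h
    exact lt_of_le_of_ne (not_lt.1 fun h' => h.not_ge (quantile_le_of_lt_cdf hα.1 h')) hne.symm
  · intro h
    exact lt_of_not_ge fun h' => h.not_ge (le_cdf_of_quantile_le hα.2 h')

instance : IsProbabilityMeasure (volume.restrict (Ioo (0:ℝ) 1)) :=
  ⟨by simp⟩

lemma measureReal_restrict_Ioo_Ioi {c : ℝ} (h₀ : 0 ≤ c) (h₁ : c ≤ 1) :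
    (volume.restrict (Ioo (0:ℝ) 1)).real (Ioi c) = 1 - c := by
  rw [measureReal_restrict_apply measurableSet_Ioi, Ioi_inter_Ioo, max_eq_left h₀,
    Real.volume_real_Ioo_of_le h₁]

lemma map_quantile [IsProbabilityMeasure μ] :
    (volume.restrict (Ioo 0 1)).map (quantile μ) = μ := by
  have := Measure.isProbabilityMeasure_map (aemeasurable_quantile (μ := μ))
  refine Measure.eq_of_cdf _ _ (StieltjesFunction.ext fun t => ?_)
  rw [cdf_eq_real, ← compl_Ioi, measureReal_compl measurableSet_Ioi, probReal_univ,
    map_measureReal_apply_of_aemeasurable aemeasurable_quantile measurableSet_Ioi,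
    measureReal_congr (quantile_preimage_Ioi_ae_eq t),
    measureReal_restrict_Ioo_Ioi (cdf_nonneg μ t) (cdf_le_one μ t), sub_sub_cancel]

end Quantile

noncomputable def quantileCoupling (μ ν : Measure ℝ) : Measure (ℝ × ℝ) :=
  (volume.restrict (Ioo 0 1)).map fun α => (quantile μ α, quantile ν α)

section QuantileCoupling

variable {μ ν : Measure ℝ}

lemma aemeasurable_quantile_prod_quantile :
    AEMeasurable (fun α => (quantile μ α, quantile ν α)) (volume.restrict (Ioo 0 1)) :=
  aemeasurable_quantile.prodMk aemeasurable_quantile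

instance : IsProbabilityMeasure (quantileCoupling μ ν) :=
  Measure.isProbabilityMeasure_map aemeasurable_quantile_prod_quantile

lemma map_fst_quantileCoupling [IsProbabilityMeasure μ] :
    (quantileCoupling μ ν).map Prod.fst = μ := by
  rw [quantileCoupling, AEMeasurable.map_map_of_aemeasurable measurable_fst.aemeasurable
    aemeasurable_quantile_prod_quantile]
  exact map_quantile

lemma map_snd_quantileCoupling [IsProbabilityMeasure ν] :
    (quantileCoupling μ ν).map Prod.snd = ν := by
  rw [quantileCoupling, AEMeasurable.map_map_of_aemeasurable measurable_snd.aemeasurable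
    aemeasurable_quantile_prod_quantile]
  exact map_quantile

lemma measureReal_quantileCoupling_Ioi_prod_Ioi [IsProbabilityMeasure μ] [IsProbabilityMeasure ν]
    (s t : ℝ) :
    (quantileCoupling μ ν).real (Ioi s ×ˢ Ioi t) = min (μ.real (Ioi s)) (ν.real (Ioi t)) := by
  rw [quantileCoupling, map_measureReal_apply_of_aemeasurable aemeasurable_quantile_prod_quantile
    (measurableSet_Ioi.prod measurableSet_Ioi), mk_preimage_prod,
    measureReal_congr ((quantile_preimage_Ioi_ae_eq s).inter (quantile_preimage_Ioi_ae_eq t)),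
    Ioi_inter_Ioi, measureReal_restrict_Ioo_Ioi (le_max_of_le_left (cdf_nonneg μ s))
      (max_le (cdf_le_one μ s) (cdf_le_one ν t)), ← compl_Iic, ← compl_Iic,
    measureReal_compl measurableSet_Iic, measureReal_compl measurableSet_Iic, probReal_univ,
    probReal_univ, ← cdf_eq_real, ← cdf_eq_real, sub_sup]

lemma integral_quantileCoupling {f : ℝ × ℝ → ℝ} (hf : Measurable f) :
    ∫ p, f p ∂quantileCoupling μ ν = ∫ α in Ioo 0 1, f (quantile μ α, quantile ν α) :=
  integral_map aemeasurable_quantile_prod_quantile hf.aestronglyMeasurable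

end QuantileCoupling

noncomputable def layer (x s : ℝ) : ℝ := (Ioi s).indicator 1 x - (Iio 0).indicator 1 s

lemma measurable_layer : Measurable (Function.uncurry layer) := by
  have h : Measurable ({p : ℝ × ℝ | p.2 < p.1}.indicator (1 : ℝ × ℝ → ℝ)) :=
    measurable_one.indicator (measurableSet_lt measurable_snd measurable_fst)
  exact h.sub ((measurable_one.indicator measurableSet_Iio).comp measurable_snd)

lemma layer_eq_indicator_sub_indicator (x : ℝ) :
    layer x = (Ico 0 x).indicator 1 - (Ico x 0).indicator 1 := by
  ext s
  by_cases h₁ : s < x <;> by_cases h₂ : s < 0 <;>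
    simp [layer, indicator_apply, h₁, h₂]

lemma norm_layer (x s : ℝ) : ‖layer x s‖ = (Ico 0 x).indicator 1 s + (Ico x 0).indicator 1 s := by
  by_cases h₁ : s < x <;> by_cases h₂ : s < 0 <;>
    simp [layer, indicator_apply, h₁, h₂]

lemma integrable_indicator_one_Ico (a b : ℝ) : Integrable ((Ico a b).indicator (1 : ℝ → ℝ)) :=
  (integrableOn_const measure_Ico_lt_top.ne).integrable_indicator measurableSet_Ico

lemma integrable_layer (x : ℝ) : Integrable (layer x) := by
  rw [layer_eq_indicator_sub_indicator]
  exact (integrable_indicator_one_Ico 0 x).sub (integrable_indicator_one_Ico x 0)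

lemma integral_layer (x : ℝ) : ∫ s, layer x s = x := by
  rw [layer_eq_indicator_sub_indicator, Pi.sub_def, integral_sub,
    integral_indicator_one measurableSet_Ico, integral_indicator_one measurableSet_Ico,
    Real.volume_real_Ico, Real.volume_real_Ico, sub_zero, zero_sub, max_zero_sub_eq_self]
  exacts [integrable_indicator_one_Ico 0 x, integrable_indicator_one_Ico x 0]

lemma integral_norm_layer (x : ℝ) : ∫ s, ‖layer x s‖ = |x| := by
  simp_rw [norm_layer]
  rw [integral_add, integral_indicator_one measurableSet_Ico,
    integral_indicator_one measurableSet_Ico, Real.volume_real_Ico, Real.volume_real_Ico, sub_zero,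
    zero_sub, max_zero_add_max_neg_zero_eq_abs_self]
  exacts [integrable_indicator_one_Ico 0 x, integrable_indicator_one_Ico x 0]

section Hoeffding

variable {γ : Measure (ℝ × ℝ)}

lemma integral_layer_mul_layer_eq_mul (x y : ℝ) :
    ∫ z : ℝ × ℝ, layer x z.1 * layer y z.2 = x * y := by
  rw [Measure.volume_eq_prod, integral_prod_mul, integral_layer, integral_layer]

lemma integrable_layer_mul_layer [SFinite γ] (h : Integrable (fun p : ℝ × ℝ => p.1 * p.2) γ) :
    Integrable (fun q : (ℝ × ℝ) × (ℝ × ℝ) => layer q.1.1 q.2.1 * layer q.1.2 q.2.2)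
      (γ.prod volume) := by
  have hmeas : Measurable fun q : (ℝ × ℝ) × (ℝ × ℝ) => layer q.1.1 q.2.1 * layer q.1.2 q.2.2 :=
    (measurable_layer.comp (measurable_fst.fst.prodMk measurable_snd.fst)).mul
      (measurable_layer.comp (measurable_fst.snd.prodMk measurable_snd.snd))
  refine (integrable_prod_iff hmeas.aestronglyMeasurable).2
    ⟨ae_of_all _ fun p => (integrable_layer p.1).mul_prod (integrable_layer p.2), ?_⟩
  refine h.norm.congr (ae_of_all _ fun p => ?_)
  simp only [norm_mul, Measure.volume_eq_prod]
  rw [integral_prod_mul (fun s => ‖layer p.1 s‖) (fun t => ‖layer p.2 t‖), integral_norm_layer,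
    integral_norm_layer, Real.norm_eq_abs, Real.norm_eq_abs]

lemma integral_mul_eq_integral_integral_layer [SFinite γ]
    (h : Integrable (fun p : ℝ × ℝ => p.1 * p.2) γ) :
    ∫ p, p.1 * p.2 ∂γ = ∫ z : ℝ × ℝ, ∫ p, layer p.1 z.1 * layer p.2 z.2 ∂γ := by
  calc ∫ p, p.1 * p.2 ∂γ = ∫ p, (∫ z : ℝ × ℝ, layer p.1 z.1 * layer p.2 z.2) ∂γ :=
        integral_congr_ae (ae_of_all _ fun p => (integral_layer_mul_layer_eq_mul p.1 p.2).symm)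
    _ = _ := integral_integral_swap (integrable_layer_mul_layer h)

lemma integral_layer_fst_mul_layer_snd [IsProbabilityMeasure γ] (s t : ℝ) :
    ∫ p, layer p.1 s * layer p.2 t ∂γ = γ.real (Ioi s ×ˢ Ioi t)
      - (Iio 0).indicator 1 t * (γ.map Prod.fst).real (Ioi s)
      - (Iio 0).indicator 1 s * (γ.map Prod.snd).real (Ioi t)
      + (Iio 0).indicator 1 s * (Iio 0).indicator 1 t := by
  set a : ℝ := (Iio 0).indicator 1 s
  set b : ℝ := (Iio 0).indicator 1 t
  have hexpand : ∀ p : ℝ × ℝ, layer p.1 s * layer p.2 t = (Ioi s ×ˢ Ioi t).indicator 1 p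
      - b * (Ioi s).indicator 1 p.1 - a * (Ioi t).indicator 1 p.2 + a * b := fun p => by
    rw [layer, layer, ← Prod.mk.eta (p := p), indicator_prod_one]
    ring
  have hmarg : ∀ {f : ℝ × ℝ → ℝ} (hf : Measurable f) (u : Set ℝ) (hu : MeasurableSet u),
      Integrable (fun p => u.indicator 1 (f p)) γ ∧
        ∫ p, u.indicator 1 (f p) ∂γ = (γ.map f).real u := fun hf u hu =>
    ⟨((integrable_const (1 : ℝ)).indicator hu).comp_measurable hf,
      by rw [← integral_indicator_one hu, integral_map hf.aemeasurable
        (measurable_one.indicator hu).aestronglyMeasurable]⟩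
  have hquad : Integrable ((Ioi s ×ˢ Ioi t).indicator (1 : ℝ × ℝ → ℝ)) γ :=
    (integrable_const 1).indicator (measurableSet_Ioi.prod measurableSet_Ioi)
  obtain ⟨hfst, hfst_eq⟩ := hmarg measurable_fst (Ioi s) measurableSet_Ioi
  obtain ⟨hsnd, hsnd_eq⟩ := hmarg measurable_snd (Ioi t) measurableSet_Ioi
  simp_rw [hexpand]
  rw [integral_add, integral_sub, integral_sub, integral_const_mul, integral_const_mul,
    integral_indicator_one (measurableSet_Ioi.prod measurableSet_Ioi), hfst_eq, hsnd_eq,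
    integral_const, probReal_univ, one_smul]
  exacts [hquad, hfst.const_mul b, hquad.sub (hfst.const_mul b), hsnd.const_mul a,
    (hquad.sub (hfst.const_mul b)).sub (hsnd.const_mul a), integrable_const _]

lemma integral_mul_le_of_measureReal_Ioi_prod_Ioi_le {γ' : Measure (ℝ × ℝ)}
    [IsProbabilityMeasure γ] [IsProbabilityMeasure γ']
    (hfst : γ.map Prod.fst = γ'.map Prod.fst) (hsnd : γ.map Prod.snd = γ'.map Prod.snd)
    (h : Integrable (fun p : ℝ × ℝ => p.1 * p.2) γ)
    (h' : Integrable (fun p : ℝ × ℝ => p.1 * p.2) γ')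
    (hle : ∀ s t, γ.real (Ioi s ×ˢ Ioi t) ≤ γ'.real (Ioi s ×ˢ Ioi t)) :
    ∫ p, p.1 * p.2 ∂γ ≤ ∫ p, p.1 * p.2 ∂γ' := by
  rw [integral_mul_eq_integral_integral_layer h, integral_mul_eq_integral_integral_layer h']
  refine integral_mono (integrable_layer_mul_layer h).integral_prod_right
    (integrable_layer_mul_layer h').integral_prod_right fun z => ?_
  simp only [integral_layer_fst_mul_layer_snd, hfst, hsnd]
  linarith [hle z.1 z.2]

end Hoeffding

lemma measureReal_prod_le_min_map {γ : Measure (ℝ × ℝ)} [IsFiniteMeasure γ] {s t : Set ℝ}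
    (hs : MeasurableSet s) (ht : MeasurableSet t) :
    γ.real (s ×ˢ t) ≤ min ((γ.map Prod.fst).real s) ((γ.map Prod.snd).real t) := by
  rw [map_measureReal_apply measurable_fst hs, map_measureReal_apply measurable_snd ht]
  exact le_min (measureReal_mono (prod_subset_preimage_fst _ _))
    (measureReal_mono (prod_subset_preimage_snd _ _))

section Cost

variable {μ ν : Measure ℝ} {γ : Measure (ℝ × ℝ)}

lemma integrable_fst_mul_snd (hfst : γ.map Prod.fst = μ) (hsnd : γ.map Prod.snd = ν)
    (hμ : Integrable (fun x => x ^ 2) μ) (hν : Integrable (fun x => x ^ 2) ν) :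
    Integrable (fun p : ℝ × ℝ => p.1 * p.2) γ := by
  have h₁ : MemLp (fun p : ℝ × ℝ => p.1) 2 γ := (memLp_two_iff_integrable_sq
    measurable_fst.aestronglyMeasurable).2 ((hfst ▸ hμ).comp_measurable measurable_fst)
  have h₂ : MemLp (fun p : ℝ × ℝ => p.2) 2 γ := (memLp_two_iff_integrable_sq
    measurable_snd.aestronglyMeasurable).2 ((hsnd ▸ hν).comp_measurable measurable_snd)
  exact h₁.integrable_mul h₂

lemma integral_sub_sq_eq (hfst : γ.map Prod.fst = μ) (hsnd : γ.map Prod.snd = ν)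
    (hμ : Integrable (fun x => x ^ 2) μ) (hν : Integrable (fun x => x ^ 2) ν) :
    ∫ p, (p.1 - p.2) ^ 2 ∂γ = ∫ x, x ^ 2 ∂μ + ∫ y, y ^ 2 ∂ν - 2 * ∫ p, p.1 * p.2 ∂γ := by
  have h₁ : Integrable (fun p : ℝ × ℝ => p.1 ^ 2) γ := (hfst ▸ hμ).comp_measurable measurable_fst
  have h₂ : Integrable (fun p : ℝ × ℝ => p.2 ^ 2) γ := (hsnd ▸ hν).comp_measurable measurable_snd
  have h₁₂ := (integrable_fst_mul_snd hfst hsnd hμ hν).const_mul 2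
  have hexpand : ∀ p : ℝ × ℝ, (p.1 - p.2) ^ 2 = p.1 ^ 2 + p.2 ^ 2 - 2 * (p.1 * p.2) :=
    fun p => by ring
  simp_rw [hexpand]
  rw [integral_sub, integral_add h₁ h₂, integral_const_mul, ← hfst, ← hsnd,
    integral_map measurable_fst.aemeasurable (by fun_prop),
    integral_map measurable_snd.aemeasurable (by fun_prop)]
  exacts [h₁.add h₂, h₁₂]

lemma integral_sub_sq_quantileCoupling_le [IsProbabilityMeasure μ] [IsProbabilityMeasure ν]
    [IsProbabilityMeasure γ] (hfst : γ.map Prod.fst = μ) (hsnd : γ.map Prod.snd = ν)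
    (hμ : Integrable (fun x => x ^ 2) μ) (hν : Integrable (fun x => x ^ 2) ν) :
    ∫ p, (p.1 - p.2) ^ 2 ∂quantileCoupling μ ν ≤ ∫ p, (p.1 - p.2) ^ 2 ∂γ := by
  have hmul := integral_mul_le_of_measureReal_Ioi_prod_Ioi_le
    (hfst.trans map_fst_quantileCoupling.symm) (hsnd.trans map_snd_quantileCoupling.symm)
    (integrable_fst_mul_snd hfst hsnd hμ hν)
    (integrable_fst_mul_snd map_fst_quantileCoupling map_snd_quantileCoupling hμ hν)
    fun s t => by
      rw [measureReal_quantileCoupling_Ioi_prod_Ioi, ← hfst, ← hsnd]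
      exact measureReal_prod_le_min_map measurableSet_Ioi measurableSet_Ioi
  rw [integral_sub_sq_eq hfst hsnd hμ hν,
    integral_sub_sq_eq map_fst_quantileCoupling map_snd_quantileCoupling hμ hν]
  linarith

end Cost

/-- One-dimensional 2-Wasserstein distance via quantile functions: for probability
measures `μ, ν` on `ℝ` with finite second moments, with cumulative distribution
functions `F, G` and generalized inverses `F⁻¹(α) = inf{x : F(x) > α}`, the
2-Wasserstein distance (square root of the infimum of `∫ |x−y|² dγ` over couplings
`γ` of `μ` and `ν`) equals `(∫_0^1 |F⁻¹(α) − G⁻¹(α)|² dα)^{1/2}`. -/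
theorem wasserstein2_eq_quantile_integral (μ ν : Measure ℝ)
    [IsProbabilityMeasure μ] [IsProbabilityMeasure ν]
    (hμ : Integrable (fun x => x ^ 2) μ) (hν : Integrable (fun x => x ^ 2) ν) :
    Real.sqrt (sInf {w : ℝ | ∃ γ : Measure (ℝ × ℝ), IsProbabilityMeasure γ ∧
        γ.map Prod.fst = μ ∧ γ.map Prod.snd = ν ∧
        w = ∫ p : ℝ × ℝ, (p.1 - p.2) ^ 2 ∂γ}) =
      Real.sqrt (∫ α in (0:ℝ)..1,
        (sInf {x : ℝ | α < (μ (Set.Iic x)).toReal} -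
          sInf {x : ℝ | α < (ν (Set.Iic x)).toReal}) ^ 2) := by
  have hleast : IsLeast {w : ℝ | ∃ γ : Measure (ℝ × ℝ), IsProbabilityMeasure γ ∧
      γ.map Prod.fst = μ ∧ γ.map Prod.snd = ν ∧ w = ∫ p : ℝ × ℝ, (p.1 - p.2) ^ 2 ∂γ}
      (∫ p, (p.1 - p.2) ^ 2 ∂quantileCoupling μ ν) := by
    refine ⟨⟨_, inferInstance, map_fst_quantileCoupling, map_snd_quantileCoupling, rfl⟩, ?_⟩
    rintro _ ⟨γ, hγ, hfst, hsnd, rfl⟩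
    exact integral_sub_sq_quantileCoupling_le hfst hsnd hμ hν
  rw [hleast.csInf_eq, integral_quantileCoupling (by fun_prop),
    intervalIntegral.integral_of_le zero_le_one, ← Measure.restrict_congr_set Ioo_ae_eq_Ioc]
  simp_rw [sInf_lt_measure_Iic_eq_quantile]
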